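/- Let X \subset P^1 \times P^1 be a zero-dimensional scheme, P \in X with multiplicity 1, Z = X \ {P}, and fix a (1,0)-line R and a (0,1)-line C through P with p = #(Z \cap R) and q = #(Z \cap C). Then for every bidegree (i,j) with i < q or j < p, h^0(I_Z(i,j)) = h^0(I_X(i,j)); consequently \Delta M_Z(i,j) = \Delta M_X(i,j) whenever i < q or j < p. -/

import Mathlib

open MvPolynomial

noncomputable section

open scoped Classical

/-- The bigraded coordinate ring of `ℙ¹ × ℙ¹`: polynomials in the variables
`x₀, x₁` (the left `Fin 2`) and `y₀, y₁` (the right `Fin 2`). -/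
abbrev BiPoly (k : Type) [Field k] := MvPolynomial (Fin 2 ⊕ Fin 2) k

/-- A point of the quadric `Q = ℙ¹ × ℙ¹`. -/
abbrev Pt (k : Type) [Field k] := Projectivization k (Fin 2 → k) × Projectivization k (Fin 2 → k)

variable (k : Type) [Field k]

/-- `f` is bihomogeneous of bidegree `(i,j)`: each monomial has degree `i` in
the `x`-variables and degree `j` in the `y`-variables. -/
def IsBihomog (i j : ℕ) (f : BiPoly k) : Prop :=
  ∀ d ∈ f.support, d (Sum.inl 0) + d (Sum.inl 1) = i ∧ d (Sum.inr 0) + d (Sum.inr 1) = j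

/-- `f` vanishes at a point of `ℙ¹ × ℙ¹` (tested on all representatives). -/
def VanishesAt (f : BiPoly k) (P : Pt k) : Prop :=
  ∀ (u v : Fin 2 → k) (hu : u ≠ 0) (hv : v ≠ 0),
    Projectivization.mk k u hu = P.1 → Projectivization.mk k v hv = P.2 →
    eval (Sum.elim u v) f = 0

/-- The bidegree-`(i,j)` piece of the (saturated) ideal of a reduced
zero-dimensional scheme `X ⊆ ℙ¹ × ℙ¹`: the `k`-vector space of bihomogeneous
forms of bidegree `(i,j)` vanishing on `X`.  Its dimension is
`h⁰(I_X(i,j)) = dim I(X)_{(i,j)}`. -/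
def idealPiece (X : Finset (Pt k)) (i j : ℕ) : Submodule k (BiPoly k) where
  carrier := {f | IsBihomog k i j f ∧ ∀ P ∈ X, VanishesAt k f P}
  zero_mem' := by
    refine ⟨?_, ?_⟩
    · intro d hd; simp at hd
    · intro P _ u v hu hv h1 h2; simp
  add_mem' := by
    rintro f g ⟨hf1, hf2⟩ ⟨hg1, hg2⟩
    refine ⟨?_, ?_⟩
    · intro d hd
      rcases Finset.mem_union.mp (MvPolynomial.support_add hd) with h | h
      exacts [hf1 d h, hg1 d h]
    · intro P hP u v hu hv h1 h2
      simp [hf2 P hP u v hu hv h1 h2, hg2 P hP u v hu hv h1 h2]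
  smul_mem' := by
    rintro c f ⟨hf1, hf2⟩
    refine ⟨?_, ?_⟩
    · intro d hd
      exact hf1 d (MvPolynomial.support_smul hd)
    · intro P hP u v hu hv h1 h2
      rw [smul_eq_C_mul, map_mul, hf2 P hP u v hu hv h1 h2, mul_zero]

/-- The bigraded Hilbert function of a reduced zero-dimensional scheme
`X ⊆ ℙ¹ × ℙ¹`, as a matrix indexed by `ℤ × ℤ`:
`M_X(i,j) = (i+1)(j+1) - dim I(X)_{(i,j)}` for `i, j ≥ 0`, and `0` otherwise. -/
def hilbMat (X : Finset (Pt k)) (i j : ℤ) : ℤ :=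
  if 0 ≤ i ∧ 0 ≤ j then
    (i + 1) * (j + 1) - (Module.finrank k (idealPiece k X i.toNat j.toNat) : ℤ)
  else 0

/-- The first difference of a matrix indexed by `ℤ × ℤ`. -/
def diffMat (M : ℤ → ℤ → ℤ) (i j : ℤ) : ℤ :=
  M i j - M (i - 1) j - M i (j - 1) + M (i - 1) (j - 1)

/-- A separator of bidegree `(q,p)` for a (multiplicity one) point `P` of the
reduced zero-dimensional scheme `X`: a bihomogeneous form of bidegree `(q,p)`
not vanishing at `P` but vanishing at all other points of `X`. -/
def IsSeparator (X : Finset (Pt k)) (P : Pt k) (q p : ℕ) (f : BiPoly k) : Prop :=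
  IsBihomog k q p f ∧ ¬ VanishesAt k f P ∧ ∀ P' ∈ X.erase P, VanishesAt k f P'


/-!
Restricting a form of bidegree `(i,j)` to the `(0,1)`-line `{y = P.2}` leaves a binary form of
degree `i` in `x`, which is zero as soon as it vanishes at more than `i` points of `ℙ¹`. So a form
of bidegree `(i,j)` with `i < q` vanishing on `Z` contains the `q` points of `Z` on that line,
hence the whole line, hence `P`; the case `j < p` is the same after swapping the two factors.
Thus `I(Z)` and `I(X)` agree in all bidegrees `(i',j') ≤ (i,j)`, and so do the four values of the
Hilbert functions entering `ΔM(i,j)`.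
-/

open Finset
open scoped LinearAlgebra.Projectivization OnePoint

lemma Polynomial.eval_homogenize_of_snd_eq_zero {R : Type*} [CommSemiring R] (p : Polynomial R)
    (n : ℕ) (x : Fin 2 → R) (hx : x 1 = 0) :
    MvPolynomial.eval x (p.homogenize n) = p.coeff n * x 0 ^ n := by
  rw [Polynomial.homogenize, map_sum, Nat.sum_antidiagonal_eq_sum_range_succ_mk, sum_range_succ,
    sum_eq_zero fun a ha => ?_]
  · simp [MvPolynomial.eval_monomial, Finsupp.prod_fintype]
  · have : n - a ≠ 0 := by simp at ha; omega
    simp [MvPolynomial.eval_monomial, Finsupp.prod_fintype, hx, zero_pow this]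

/- Dehomogenize: `F(t) = g(t,1)` has degree at most `n`, the points `[t:1]` of `T` are roots
of `F`, and the point `[1:0]` forces the coefficient of `tⁿ` to vanish. -/
theorem MvPolynomial.IsHomogeneous.eq_zero_of_lt_card {K : Type*} [Field K]
    {g : MvPolynomial (Fin 2) K} {n : ℕ} (hg : g.IsHomogeneous n)
    (T : Finset (ℙ K (Fin 2 → K))) (hT : n < #T)
    (hvan : ∀ c ∈ T, ∀ u (hu : u ≠ 0), Projectivization.mk K u hu = c → eval u g = 0) :
    g = 0 := by
  classical
  set F : Polynomial K := MvPolynomial.aeval ![Polynomial.X, 1] g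
  have hFdeg : F.natDegree ≤ n := by
    simpa using aeval_natDegree_le g hg.totalDegree_le _ (n := 1) fun i => by fin_cases i <;> simp
  have hFg : F.homogenize n = g := Polynomial.homogenize_eq_of_isHomogeneous hg rfl
  suffices hF : F = 0 by rw [← hFg, hF, Polynomial.homogenize_zero]
  by_contra hF
  let e := OnePoint.equivProjectivization K
  set Z := F.roots.toFinset.image fun t : K => e t
  have hZ : #Z ≤ F.natDegree :=
    card_image_le.trans ((Multiset.toFinset_card_le _).trans (Polynomial.card_roots' F))
  have hsub : T ⊆ insert (e ∞) Z := by
    intro c hc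
    obtain ⟨x, rfl⟩ := e.surjective c
    induction x using OnePoint.rec with
    | infty => exact mem_insert_self _ _
    | coe t =>
      have hroot := hvan _ hc ![t, 1] (by simp) rfl
      rw [← hFg, Polynomial.eval_homogenize hFdeg _ (by simp)] at hroot
      exact mem_insert_of_mem (mem_image_of_mem _ (by simpa [hF] using hroot))
  have hcard : #T ≤ n := by
    by_cases hinf : e ∞ ∈ T
    · have hcoeff := hvan _ hinf ![1, 0] (by simp) rfl
      rw [← hFg, Polynomial.eval_homogenize_of_snd_eq_zero _ _ _ (by simp)] at hcoeff
      have hFlt : F.natDegree < n := hFdeg.lt_of_ne fun hn => hF <| by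
        rw [← Polynomial.leadingCoeff_eq_zero, Polynomial.leadingCoeff, hn]
        simpa using hcoeff
      calc #T ≤ #(insert (e ∞) Z) := card_le_card hsub
        _ ≤ #Z + 1 := card_insert_le _ _
        _ ≤ n := by omega
    · calc #T ≤ #Z := card_le_card fun c hc =>
            (mem_insert.1 (hsub hc)).resolve_left (by rintro rfl; exact hinf hc)
        _ ≤ n := hZ.trans hFdeg
  omega

section

variable {k}

/-- Restriction of a form on `ℙ¹ × ℙ¹` to the `(0,1)`-line `{y = [v]}`. -/
def evalSnd (v : Fin 2 → k) : BiPoly k →ₐ[k] MvPolynomial (Fin 2) k :=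
  bind₁ (Sum.elim X fun s => C (v s))

lemma eval_evalSnd (u v : Fin 2 → k) (f : BiPoly k) :
    eval u (evalSnd v f) = eval (Sum.elim u v) f := by
  rw [evalSnd, eval, eval₂Hom_bind₁, eval]
  congr 2
  funext s
  rcases s with s | s <;> simp

lemma IsBihomog.isHomogeneous_evalSnd {i j : ℕ} {f : BiPoly k} (hf : IsBihomog k i j f)
    (v : Fin 2 → k) : (evalSnd v f).IsHomogeneous i := by
  rw [f.as_sum, map_sum]
  refine IsHomogeneous.sum _ _ _ fun d hd => ?_
  rw [evalSnd, ← aeval_eq_bind₁, aeval_monomial, Finsupp.prod_fintype _ _ fun _ => pow_zero _,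
    Fintype.prod_sum_type, Fin.prod_univ_two, Fin.prod_univ_two, ← (hf d hd).1]
  simp only [Sum.elim_inl, Sum.elim_inr, algebraMap_eq]
  simpa using (isHomogeneous_C _ _).mul
    (((isHomogeneous_X_pow _ _).mul (isHomogeneous_X_pow _ _)).mul
      (((isHomogeneous_C _ _).pow _).mul ((isHomogeneous_C _ _).pow _)))

lemma IsBihomog.rename_swap {i j : ℕ} {f : BiPoly k} (hf : IsBihomog k i j f) :
    IsBihomog k j i (rename Sum.swap f) := by
  intro d hd
  have hswap := (Sum.swap_leftInverse (α := Fin 2) (β := Fin 2)).injective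
  rw [support_rename_of_injective hswap] at hd
  obtain ⟨e, he, rfl⟩ := mem_image.mp hd
  change e.mapDomain Sum.swap (.swap (.inr 0)) + e.mapDomain Sum.swap (.swap (.inr 1)) = j ∧
    e.mapDomain Sum.swap (.swap (.inl 0)) + e.mapDomain Sum.swap (.swap (.inl 1)) = i
  simp only [Finsupp.mapDomain_apply hswap]
  exact (hf e he).symm

lemma vanishesAt_rename_swap {f : BiPoly k} {Q : Pt k} :
    VanishesAt k (rename Sum.swap f) Q.swap ↔ VanishesAt k f Q := by
  simp only [VanishesAt, eval_rename, Sum.elim_swap]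
  exact ⟨fun h u v hu hv h1 h2 => h v u hv hu h2 h1, fun h v u hv hu h1 h2 => h u v hu hv h2 h1⟩

theorem vanishesAt_of_lt_card_snd_eq {i j : ℕ} {f : BiPoly k} (hf : IsBihomog k i j f)
    {P : Pt k} {S : Finset (Pt k)} (hS : ∀ Q ∈ S, Q.2 = P.2) (hcard : i < #S)
    (hvan : ∀ Q ∈ S, VanishesAt k f Q) : VanishesAt k f P := by
  intro u v hu hv _ hvP
  have hinj : Set.InjOn Prod.fst (S : Set (Pt k)) := fun Q hQ Q' hQ' h =>
    Prod.ext h ((hS Q hQ).trans (hS Q' hQ').symm)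
  have hg : evalSnd v f = 0 := by
    refine (hf.isHomogeneous_evalSnd v).eq_zero_of_lt_card (S.image Prod.fst)
      (by rwa [card_image_of_injOn hinj]) ?_
    simp only [mem_image]
    rintro _ ⟨Q, hQ, rfl⟩ w hw hwQ
    rw [eval_evalSnd]
    exact hvan Q hQ w v hw hv hwQ (hvP.trans (hS Q hQ).symm)
  rw [← eval_evalSnd, hg, map_zero]

theorem vanishesAt_of_lt_card_fst_eq {i j : ℕ} {f : BiPoly k} (hf : IsBihomog k i j f)
    {P : Pt k} {S : Finset (Pt k)} (hS : ∀ Q ∈ S, Q.1 = P.1) (hcard : j < #S)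
    (hvan : ∀ Q ∈ S, VanishesAt k f Q) : VanishesAt k f P := by
  rw [← vanishesAt_rename_swap]
  refine vanishesAt_of_lt_card_snd_eq hf.rename_swap (S := S.image Prod.swap) ?_
    (by rwa [card_image_of_injective _ Prod.swap_injective]) ?_ <;>
  simp only [mem_image] <;> rintro _ ⟨Q, hQ, rfl⟩
  · exact hS Q hQ
  · exact vanishesAt_rename_swap.mpr (hvan Q hQ)

theorem idealPiece_anti {X Y : Finset (Pt k)} (h : X ⊆ Y) (i j : ℕ) :
    idealPiece k Y i j ≤ idealPiece k X i j :=
  fun _ hf => ⟨hf.1, fun Q hQ => hf.2 Q (h hQ)⟩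

theorem idealPiece_erase_eq (X : Finset (Pt k)) (P : Pt k) {i j : ℕ}
    (h : i < #((X.erase P).filter fun Q => Q.2 = P.2) ∨
      j < #((X.erase P).filter fun Q => Q.1 = P.1)) :
    idealPiece k (X.erase P) i j = idealPiece k X i j := by
  refine le_antisymm (fun f ⟨hf, hvan⟩ => ⟨hf, fun Q hQ => ?_⟩)
    (idealPiece_anti (erase_subset P X) i j)
  by_cases hQP : Q = P
  · subst hQP
    rcases h with h | h
    · exact vanishesAt_of_lt_card_snd_eq hf (fun R hR => (mem_filter.1 hR).2) h
        fun R hR => hvan R (mem_filter.1 hR).1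
    · exact vanishesAt_of_lt_card_fst_eq hf (fun R hR => (mem_filter.1 hR).2) h
        fun R hR => hvan R (mem_filter.1 hR).1
  · exact hvan Q (mem_erase.2 ⟨hQP, hQ⟩)

end

theorem h0_eq_low_degrees_general (k : Type) [Field k]
    (X : Finset (Pt k)) (P : Pt k)
    (p q : ℕ)
    (hp : p = ((X.erase P).filter (fun P' => P'.1 = P.1)).card)
    (hq : q = ((X.erase P).filter (fun P' => P'.2 = P.2)).card) :
    (∀ i j : ℕ, i < q ∨ j < p →
      Module.finrank k (idealPiece k (X.erase P) i j) = Module.finrank k (idealPiece k X i j)) ∧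
    (∀ i j : ℤ, i < (q : ℤ) ∨ j < (p : ℤ) →
      diffMat (hilbMat k (X.erase P)) i j = diffMat (hilbMat k X) i j) := by
  have hpiece (i j : ℕ) (h : i < q ∨ j < p) :
      idealPiece k (X.erase P) i j = idealPiece k X i j :=
    idealPiece_erase_eq X P (hq ▸ hp ▸ h)
  have hhilb (i j : ℤ) (h : i < q ∨ j < p) : hilbMat k (X.erase P) i j = hilbMat k X i j := by
    unfold hilbMat
    split_ifs
    · rw [hpiece _ _ (by omega)]
    · rfl
  refine ⟨fun i j h => by rw [hpiece i j h], fun i j h => ?_⟩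
  rw [diffMat, diffMat, hhilb i j h, hhilb (i - 1) j (by omega), hhilb i (j - 1) (by omega),
    hhilb (i - 1) (j - 1) (by omega)]

/-- A step of Theorem 3.1: for `Z = X \ {P}`, with `p` the number of points of
`Z` on the `(1,0)`-line through `P` and `q` the number of points of `Z` on the
`(0,1)`-line through `P`, one has `h⁰(I_Z(i,j)) = h⁰(I_X(i,j))` whenever
`i < q` or `j < p`; consequently `ΔM_Z(i,j) = ΔM_X(i,j)` in that range. -/
theorem h0_eq_low_degrees (k : Type) [Field k] [IsAlgClosed k]
    (X : Finset (Pt k)) (P : Pt k) (hP : P ∈ X)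
    (p q : ℕ)
    (hp : p = ((X.erase P).filter (fun P' => P'.1 = P.1)).card)
    (hq : q = ((X.erase P).filter (fun P' => P'.2 = P.2)).card) :
    (∀ i j : ℕ, i < q ∨ j < p →
      Module.finrank k (idealPiece k (X.erase P) i j) = Module.finrank k (idealPiece k X i j)) ∧
    (∀ i j : ℤ, i < (q : ℤ) ∨ j < (p : ℤ) →
      diffMat (hilbMat k (X.erase P)) i j = diffMat (hilbMat k X) i j) :=
  h0_eq_low_degrees_general k X P p q hp hq

end
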